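/- For all δ > 0 and M > 0 with M sufficiently large relative to δ (e.g., M ≥ 2δ suffices for s₁ < s₀), the three cosine-similarity scores s₀ = 1 − δ/√(δ² + M²), s₁ = 1 − √(δ² + M²)/√(2δ² + M²), and s₂ = 1 − δ(M+1)/(√(2δ² + M²)·√(1 + M²)) satisfy s₁ < s₀ and s₁ < s₂; i.e., the middle block has the strictly smallest cosine-similarity score. -/
import Mathlib


theorem stmt_19 (δ : ℝ) (hδ : 0 < δ)
    (s₀ s₁ s₂ : ℝ → ℝ)
    (hs₀ : ∀ M, s₀ M = 1 - δ / Real.sqrt (δ ^ 2 + M ^ 2))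
    (hs₁ : ∀ M, s₁ M = 1 - Real.sqrt (δ ^ 2 + M ^ 2) / Real.sqrt (2 * δ ^ 2 + M ^ 2))
    (hs₂ : ∀ M, s₂ M =
      1 - δ * (M + 1) / (Real.sqrt (2 * δ ^ 2 + M ^ 2) * Real.sqrt (1 + M ^ 2))) :
    (∀ M : ℝ, 2 * δ ≤ M → s₁ M < s₀ M) ∧
    ∃ M₀ : ℝ, 0 < M₀ ∧ ∀ M : ℝ, M₀ ≤ M → s₁ M < s₀ M ∧ s₁ M < s₂ M := by
  have key : ∀ M : ℝ, 2 * δ ≤ M → s₁ M < s₀ M ∧ s₁ M < s₂ M := by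
    intro M hM
    have hδM : δ < M := by linarith
    have hM0 : 0 < M := by linarith
    have hA : 0 < δ ^ 2 + M ^ 2 := by positivity
    have hB : 0 < 2 * δ ^ 2 + M ^ 2 := by positivity
    have hC : 0 < 1 + M ^ 2 := by positivity
    have hsA : 0 < Real.sqrt (δ ^ 2 + M ^ 2) := Real.sqrt_pos.2 hA
    have hsB : 0 < Real.sqrt (2 * δ ^ 2 + M ^ 2) := Real.sqrt_pos.2 hB
    have hsC : 0 < Real.sqrt (1 + M ^ 2) := Real.sqrt_pos.2 hC
    have hsAsq : Real.sqrt (δ ^ 2 + M ^ 2) ^ 2 = δ ^ 2 + M ^ 2 := Real.sq_sqrt hA.le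
    have hsBsq : Real.sqrt (2 * δ ^ 2 + M ^ 2) ^ 2 = 2 * δ ^ 2 + M ^ 2 := Real.sq_sqrt hB.le
    have hsCsq : Real.sqrt (1 + M ^ 2) ^ 2 = 1 + M ^ 2 := Real.sq_sqrt hC.le
    constructor
    · rw [hs₀, hs₁]
      have hsq : δ ^ 2 < M ^ 2 := by nlinarith
      have h1 : δ ^ 2 * (2 * δ ^ 2 + M ^ 2) < (δ ^ 2 + M ^ 2) ^ 2 := by
        nlinarith [mul_lt_mul_of_pos_left hsq (show (0:ℝ) < δ ^ 2 by positivity),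
          pow_pos hM0 4]
      have h2 : δ * Real.sqrt (2 * δ ^ 2 + M ^ 2) < δ ^ 2 + M ^ 2 := by
        nlinarith [h1, hsBsq, hA.le, mul_nonneg hδ.le hsB.le]
      have h3 : δ / Real.sqrt (δ ^ 2 + M ^ 2)
          < Real.sqrt (δ ^ 2 + M ^ 2) / Real.sqrt (2 * δ ^ 2 + M ^ 2) := by
        rw [div_lt_div_iff₀ hsA hsB]
        nlinarith [h2, Real.mul_self_sqrt hA.le]
      linarith
    · rw [hs₁, hs₂]
      have h3 : δ ^ 2 * (M + 1) ^ 2 < (δ ^ 2 + M ^ 2) * (1 + M ^ 2) := by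
        nlinarith [mul_nonneg hM0.le (sq_nonneg (M - 1)), sq_nonneg (M - δ),
          mul_pos hM0 hM0, mul_pos hδ hM0]
      have hACsq : (Real.sqrt (δ ^ 2 + M ^ 2) * Real.sqrt (1 + M ^ 2)) ^ 2
          = (δ ^ 2 + M ^ 2) * (1 + M ^ 2) := by rw [mul_pow, hsAsq, hsCsq]
      have h4 : δ * (M + 1) < Real.sqrt (δ ^ 2 + M ^ 2) * Real.sqrt (1 + M ^ 2) := by
        nlinarith [h3, hACsq, mul_pos hsA hsC, mul_pos hδ (by linarith : (0:ℝ) < M + 1)]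
      have h5 : δ * (M + 1) / (Real.sqrt (2 * δ ^ 2 + M ^ 2) * Real.sqrt (1 + M ^ 2))
          < Real.sqrt (δ ^ 2 + M ^ 2) / Real.sqrt (2 * δ ^ 2 + M ^ 2) := by
        rw [div_lt_div_iff₀ (mul_pos hsB hsC) hsB]
        nlinarith [mul_lt_mul_of_pos_right h4 hsB]
      linarith
  exact ⟨fun M hM => (key M hM).1, 2 * δ, by positivity, key⟩
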